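/- Let P₁, P₂ be pastures with P₁ finitely related, and let f : P₁ → P₂ be a pasture morphism. The following are equivalent: (1) f is an isomorphism of pastures; (2) f restricts to a group isomorphism P₁× → P₂× and the map (a,b,c) ↦ (f(a),f(b),f(c)) restricts to a bijection N_{P₁} → N_{P₂}; (3) f restricts to a group isomorphism P₁× → P₂× and FP(P₁) and FP(P₂) have the same (finite) cardinality. -/

import Mathlib

/-!
A morphism that is bijective on units is bijective, and its set-theoretic inverse is again
multiplicative, so `f` is an isomorphism exactly when every null triple of `P₂` lifts to a null
triple of `P₁`. Up to permutation and scaling by a unit, a null triple is `(0, 0, 0)`, `(1, ε, 0)`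
or `(x, y, ε)` with `(x, y)` fundamental; hence lifting null triples amounts to lifting
fundamental pairs, i.e. to surjectivity of the injective map `FP(P₁) → FP(P₂)`, which for finite
`FP(P₁)` is equality of cardinalities.
-/

/-- A *pasture*: a commutative monoid with absorbing zero whose nonzero elements form an
abelian group (i.e. a `CommGroupWithZero`), together with a nullset `null ⊆ P³` satisfying
(P1) `(1,0,0) ∉ null`, (P2) there is a unique `e` with `(1,e,0) ∈ null`, and (P3) `null` is
closed under the action of `S₃ × P` (encoded via the two generating transpositions together
with simultaneous scaling). -/
structure Pasture where
  carrier : Type*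
  [str : CommGroupWithZero carrier]
  null : Set (carrier × carrier × carrier)
  one_zero_zero_not_mem : ((1 : carrier), (0 : carrier), (0 : carrier)) ∉ null
  epsilon_existsUnique : ∃! e : carrier, ((1 : carrier), e, (0 : carrier)) ∈ null
  swap_left_mem : ∀ {a b c : carrier}, (a, b, c) ∈ null → (b, a, c) ∈ null
  swap_right_mem : ∀ {a b c : carrier}, (a, b, c) ∈ null → (a, c, b) ∈ null
  scale_mem : ∀ {a b c : carrier} (p : carrier), (a, b, c) ∈ null → (a * p, b * p, c * p) ∈ null

attribute [instance] Pasture.str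


/-- The distinguished element `ε` of a pasture. -/
noncomputable def Pasture.eps (P : Pasture) : P.carrier := P.epsilon_existsUnique.choose

/-- The set of fundamental pairs of a pasture: pairs `(x, y)` of nonzero elements with
`(x, y, ε) ∈ N_P`. -/
def Pasture.FP (P : Pasture) : Set (P.carrier × P.carrier) :=
  {p | p.1 ≠ 0 ∧ p.2 ≠ 0 ∧ (p.1, p.2, P.eps) ∈ P.null}

/-- The set of fundamental elements of a pasture. -/
def Pasture.FE (P : Pasture) : Set P.carrier := {x | ∃ y, (x, y) ∈ P.FP}

/-- A pasture morphism: a map of sets with `f 0 = 0`, whose restriction to the unit groups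
is a group homomorphism, and which maps the nullset into the nullset. -/
def IsPastureMorphism (P₁ P₂ : Pasture) (f : P₁.carrier → P₂.carrier) : Prop :=
  f 0 = 0 ∧ (∀ x : P₁.carrier, x ≠ 0 → f x ≠ 0) ∧
    (∀ x y : P₁.carrier, x ≠ 0 → y ≠ 0 → f (x * y) = f x * f y) ∧
    ∀ a b c : P₁.carrier, (a, b, c) ∈ P₁.null → (f a, f b, f c) ∈ P₂.null


namespace Pasture

variable {P : Pasture}

lemma eps_mem (P : Pasture) : ((1 : P.carrier), P.eps, 0) ∈ P.null :=
  P.epsilon_existsUnique.choose_spec.1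

lemma eq_eps_of_mem {e : P.carrier} (h : ((1 : P.carrier), e, 0) ∈ P.null) : e = P.eps :=
  P.epsilon_existsUnique.choose_spec.2 e h

lemma eps_ne_zero (P : Pasture) : P.eps ≠ 0 :=
  fun h => P.one_zero_zero_not_mem (h ▸ P.eps_mem)

lemma zero_mem_null (P : Pasture) : ((0 : P.carrier), 0, 0) ∈ P.null := by
  simpa using P.scale_mem 0 P.eps_mem

lemma mem_null_zero_iff {a b : P.carrier} (ha : a ≠ 0) :
    (a, b, (0 : P.carrier)) ∈ P.null ↔ b = P.eps * a := by
  constructor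
  · intro h
    have h1 : ((1 : P.carrier), b * a⁻¹, 0) ∈ P.null := by
      simpa [mul_inv_cancel₀ ha] using P.scale_mem a⁻¹ h
    rw [← eq_eps_of_mem h1, inv_mul_cancel_right₀ ha]
  · rintro rfl
    simpa using P.scale_mem a P.eps_mem

lemma not_mem_null_zero_zero {a : P.carrier} (ha : a ≠ 0) : (a, (0 : P.carrier), 0) ∉ P.null :=
  fun h => P.one_zero_zero_not_mem (by simpa [mul_inv_cancel₀ ha] using P.scale_mem a⁻¹ h)

lemma eps_mul_eps (P : Pasture) : P.eps * P.eps = 1 :=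
  ((mem_null_zero_iff P.eps_ne_zero).1 (P.swap_left_mem P.eps_mem)).symm

theorem null_subset_of_closed {S : Set (P.carrier × P.carrier × P.carrier)}
    (swap_left : ∀ {a b c}, (a, b, c) ∈ S → (b, a, c) ∈ S)
    (swap_right : ∀ {a b c}, (a, b, c) ∈ S → (a, c, b) ∈ S)
    (scale : ∀ {a b c p}, p ≠ 0 → (a, b, c) ∈ S → (a * p, b * p, c * p) ∈ S)
    (zero_mem : ((0 : P.carrier), 0, 0) ∈ S) (eps_mem : ((1 : P.carrier), P.eps, 0) ∈ S)
    (fundamental_mem : ∀ x y, (x, y) ∈ P.FP → (x, y, P.eps) ∈ S) :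
    P.null ⊆ S := by
  have zero_right : ∀ {a b : P.carrier}, (a, b, 0) ∈ P.null → (a, b, 0) ∈ S := by
    intro a b h
    by_cases ha : a = 0
    · subst ha
      obtain rfl : b = 0 := by
        by_contra hb
        exact not_mem_null_zero_zero hb (P.swap_left_mem h)
      exact zero_mem
    · obtain rfl := (mem_null_zero_iff ha).1 h
      simpa [mul_comm] using scale ha eps_mem
  rintro ⟨a, b, c⟩ h
  by_cases hc : c = 0
  · subst hc
    exact zero_right h
  by_cases hb : b = 0
  · subst hb
    exact swap_right (zero_right (P.swap_right_mem h))
  by_cases ha : a = 0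
  · subst ha
    exact swap_left (swap_right (zero_right (P.swap_right_mem (P.swap_left_mem h))))
  -- Scaling by `k⁻¹` with `k = ε c` moves `c` to `ε`, since `ε⁻¹ = ε`.
  set k := P.eps * c
  have hk : k ≠ 0 := mul_ne_zero P.eps_ne_zero hc
  have hck : c * k⁻¹ = P.eps := by
    rw [mul_inv, ← mul_assoc, mul_comm c, mul_assoc, mul_inv_cancel₀ hc, mul_one,
      inv_eq_of_mul_eq_one_right P.eps_mul_eps]
  have hfp : (a * k⁻¹, b * k⁻¹) ∈ P.FP := by
    refine ⟨mul_ne_zero ha (inv_ne_zero hk), mul_ne_zero hb (inv_ne_zero hk), ?_⟩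
    simpa only [hck] using P.scale_mem k⁻¹ h
  have := scale hk (fundamental_mem _ _ hfp)
  rwa [← hck, inv_mul_cancel_right₀ hk, inv_mul_cancel_right₀ hk, inv_mul_cancel_right₀ hk] at this

end Pasture

namespace IsPastureMorphism

open Function Set

variable {P₁ P₂ : Pasture} {f : P₁.carrier → P₂.carrier}

lemma map_zero (hf : IsPastureMorphism P₁ P₂ f) : f 0 = 0 :=
  hf.1

lemma map_ne_zero (hf : IsPastureMorphism P₁ P₂ f) {x : P₁.carrier} (hx : x ≠ 0) : f x ≠ 0 :=
  hf.2.1 x hx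

lemma map_mem_null (hf : IsPastureMorphism P₁ P₂ f) {a b c : P₁.carrier}
    (h : (a, b, c) ∈ P₁.null) : (f a, f b, f c) ∈ P₂.null :=
  hf.2.2.2 a b c h

lemma map_mul (hf : IsPastureMorphism P₁ P₂ f) (x y : P₁.carrier) : f (x * y) = f x * f y := by
  by_cases hx : x = 0
  · simp [hx, hf.map_zero]
  by_cases hy : y = 0
  · simp [hy, hf.map_zero]
  exact hf.2.2.1 x y hx hy

lemma map_one (hf : IsPastureMorphism P₁ P₂ f) : f 1 = 1 :=
  (mul_eq_left₀ (hf.map_ne_zero one_ne_zero)).1 (by rw [← hf.map_mul, one_mul])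

lemma map_eps (hf : IsPastureMorphism P₁ P₂ f) : f P₁.eps = P₂.eps :=
  Pasture.eq_eps_of_mem (by simpa [hf.map_one, hf.map_zero] using hf.map_mem_null P₁.eps_mem)

lemma mapsTo_FP (hf : IsPastureMorphism P₁ P₂ f) : MapsTo (Prod.map f f) P₁.FP P₂.FP :=
  fun _ ⟨hx, hy, hxy⟩ =>
    ⟨hf.map_ne_zero hx, hf.map_ne_zero hy, hf.map_eps ▸ hf.map_mem_null hxy⟩

lemma bijective_iff_bijOn (hf : IsPastureMorphism P₁ P₂ f) :
    Bijective f ↔ BijOn f {x | x ≠ 0} {y | y ≠ 0} := by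
  have eq_zero_iff : ∀ {x}, f x = 0 ↔ x = 0 :=
    fun {x} => ⟨not_imp_not.1 hf.map_ne_zero, fun hx => hx ▸ hf.map_zero⟩
  constructor
  · intro hbij
    refine ⟨fun x hx => hf.map_ne_zero hx, hbij.1.injOn, fun y hy => ?_⟩
    obtain ⟨x, rfl⟩ := hbij.2 y
    exact ⟨x, mt eq_zero_iff.2 hy, rfl⟩
  · intro hbij
    refine ⟨fun x y hxy => ?_, fun y => ?_⟩
    · by_cases hx : x = 0
      · rw [hx, hf.map_zero, eq_comm, eq_zero_iff] at hxy
        rw [hx, hxy]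
      by_cases hy : y = 0
      · rw [hy, hf.map_zero, eq_zero_iff] at hxy
        exact absurd hxy hx
      exact hbij.injOn hx hy hxy
    · by_cases hy : y = 0
      · exact ⟨0, hy ▸ hf.map_zero⟩
      obtain ⟨x, -, rfl⟩ := hbij.surjOn hy
      exact ⟨x, rfl⟩

lemma bijOn_null_iff_surjOn (hf : IsPastureMorphism P₁ P₂ f) (hinj : Injective f) :
    BijOn (Prod.map f (Prod.map f f)) P₁.null P₂.null ↔
      SurjOn (Prod.map f (Prod.map f f)) P₁.null P₂.null :=
  ⟨BijOn.surjOn, fun hsurj =>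
    ⟨fun _ ht => hf.map_mem_null ht, (hinj.prodMap (hinj.prodMap hinj)).injOn, hsurj⟩⟩

lemma of_inverse (hf : IsPastureMorphism P₁ P₂ f) {g : P₂.carrier → P₁.carrier}
    (hgf : LeftInverse g f) (hfg : RightInverse g f)
    (hnull : SurjOn (Prod.map f (Prod.map f f)) P₁.null P₂.null) :
    IsPastureMorphism P₂ P₁ g := by
  have map_zero : g 0 = 0 := by rw [← hf.map_zero, hgf]
  refine ⟨map_zero, fun y hy hgy => hy ?_, fun x y _ _ => hgf.injective ?_, fun a b c h => ?_⟩
  · rw [← hfg y, hgy, hf.map_zero]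
  · rw [hfg, hf.map_mul, hfg, hfg]
  · obtain ⟨⟨a', b', c'⟩, h', ht⟩ := hnull h
    simp only [Prod.map, Prod.mk.injEq] at ht
    rwa [← ht.1, ← ht.2.1, ← ht.2.2, hgf, hgf, hgf]

lemma exists_inverse_iff (hf : IsPastureMorphism P₁ P₂ f) :
    (∃ g : P₂.carrier → P₁.carrier, IsPastureMorphism P₂ P₁ g ∧
        (∀ x, g (f x) = x) ∧ (∀ y, f (g y) = y)) ↔
      Bijective f ∧ SurjOn (Prod.map f (Prod.map f f)) P₁.null P₂.null := by
  constructor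
  · rintro ⟨g, hg, hgf, hfg⟩
    refine ⟨bijective_iff_has_inverse.2 ⟨g, hgf, hfg⟩, fun t ht => ?_⟩
    exact ⟨Prod.map g (Prod.map g g) t, hg.2.2.2 _ _ _ ht, by simp [Prod.map, hfg]⟩
  · rintro ⟨hbij, hnull⟩
    obtain ⟨g, hgf, hfg⟩ := bijective_iff_has_inverse.1 hbij
    exact ⟨g, hf.of_inverse hgf hfg hnull, hgf, hfg⟩

lemma surjOn_FP_of_surjOn_null (hf : IsPastureMorphism P₁ P₂ f) (hinj : Injective f)
    (hnull : SurjOn (Prod.map f (Prod.map f f)) P₁.null P₂.null) :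
    SurjOn (Prod.map f f) P₁.FP P₂.FP := by
  rintro ⟨u, v⟩ ⟨hu, hv, huv⟩
  obtain ⟨⟨a, b, c⟩, habc, ht⟩ := hnull huv
  simp only [Prod.map, Prod.mk.injEq] at ht
  obtain rfl : c = P₁.eps := hinj (ht.2.2.trans hf.map_eps.symm)
  refine ⟨(a, b), ⟨?_, ?_, habc⟩, by simp [ht.1, ht.2.1]⟩
  · rintro rfl
    exact hu (ht.1 ▸ hf.map_zero)
  · rintro rfl
    exact hv (ht.2.1 ▸ hf.map_zero)

lemma surjOn_null_of_surjOn_FP (hf : IsPastureMorphism P₁ P₂ f) (hsurj : Surjective f)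
    (hFP : SurjOn (Prod.map f f) P₁.FP P₂.FP) :
    SurjOn (Prod.map f (Prod.map f f)) P₁.null P₂.null := by
  refine Pasture.null_subset_of_closed ?_ ?_ ?_ ?_ ?_ ?_
  · rintro a b c ⟨⟨a', b', c'⟩, h, ht⟩
    exact ⟨(b', a', c'), P₁.swap_left_mem h, by simp_all [Prod.map]⟩
  · rintro a b c ⟨⟨a', b', c'⟩, h, ht⟩
    exact ⟨(a', c', b'), P₁.swap_right_mem h, by simp_all [Prod.map]⟩
  · rintro a b c p - ⟨⟨a', b', c'⟩, h, ht⟩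
    obtain ⟨q, rfl⟩ := hsurj p
    exact ⟨(a' * q, b' * q, c' * q), P₁.scale_mem q h, by simp_all [Prod.map, hf.map_mul]⟩
  · exact ⟨(0, 0, 0), P₁.zero_mem_null, by simp [Prod.map, hf.map_zero]⟩
  · exact ⟨(1, P₁.eps, 0), P₁.eps_mem, by simp [Prod.map, hf.map_zero, hf.map_one, hf.map_eps]⟩
  · intro x y hxy
    obtain ⟨⟨x', y'⟩, h, ht⟩ := hFP hxy
    exact ⟨(x', y', P₁.eps), h.2.2, by simp_all [Prod.map, hf.map_eps]⟩

lemma surjOn_FP_iff (hf : IsPastureMorphism P₁ P₂ f) (hinj : Injective f)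
    (hfin : P₁.FP.Finite) :
    SurjOn (Prod.map f f) P₁.FP P₂.FP ↔ P₂.FP.Finite ∧ P₁.FP.ncard = P₂.FP.ncard := by
  have hcard : (Prod.map f f '' P₁.FP).ncard = P₁.FP.ncard :=
    ncard_image_of_injective _ (hinj.prodMap hinj)
  constructor
  · intro hsurj
    have himage : Prod.map f f '' P₁.FP = P₂.FP := hf.mapsTo_FP.image_subset.antisymm hsurj
    exact ⟨himage ▸ hfin.image _, himage ▸ hcard.symm⟩
  · rintro ⟨hfin₂, hcard₂⟩
    exact (eq_of_subset_of_ncard_le hf.mapsTo_FP.image_subset (hcard.trans hcard₂).ge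
      hfin₂).symm.subset

end IsPastureMorphism

/-- For a pasture morphism `f : P₁ → P₂` with `P₁` finitely related (i.e. `FP(P₁)` finite),
the following are equivalent: (1) `f` is an isomorphism of pastures; (2) `f` restricts to a
bijection on unit groups and the induced map on triples restricts to a bijection
`N_{P₁} → N_{P₂}`; (3) `f` restricts to a bijection on unit groups and `FP(P₁)`, `FP(P₂)`
have the same finite cardinality. -/
theorem isPastureIso_tfae (P₁ P₂ : Pasture) (hfin : P₁.FP.Finite)
    (f : P₁.carrier → P₂.carrier) (hf : IsPastureMorphism P₁ P₂ f) :
    List.TFAE [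
      (∃ g : P₂.carrier → P₁.carrier, IsPastureMorphism P₂ P₁ g ∧
        (∀ x, g (f x) = x) ∧ (∀ y, f (g y) = y)),
      (Set.BijOn f {x : P₁.carrier | x ≠ 0} {y : P₂.carrier | y ≠ 0} ∧
        Set.BijOn (fun t : P₁.carrier × P₁.carrier × P₁.carrier => (f t.1, f t.2.1, f t.2.2))
          P₁.null P₂.null),
      (Set.BijOn f {x : P₁.carrier | x ≠ 0} {y : P₂.carrier | y ≠ 0} ∧
        P₂.FP.Finite ∧ P₁.FP.ncard = P₂.FP.ncard)] := by
  tfae_have 1 ↔ 2 := by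
    rw [hf.exists_inverse_iff, hf.bijective_iff_bijOn]
    exact and_congr_right fun hbij =>
      (hf.bijOn_null_iff_surjOn (hf.bijective_iff_bijOn.2 hbij).1).symm
  tfae_have 2 ↔ 3 := and_congr_right fun hbij => by
    have hbij' := hf.bijective_iff_bijOn.2 hbij
    refine (hf.bijOn_null_iff_surjOn hbij'.1).trans
      (Iff.trans ?_ (hf.surjOn_FP_iff hbij'.1 hfin))
    exact ⟨hf.surjOn_FP_of_surjOn_null hbij'.1, hf.surjOn_null_of_surjOn_FP hbij'.2⟩
  tfae_finish
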